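/- Let P be a finite poset and R a commutative unital ring. Set Z^3_1(P,R) = J^3_1(P,R) and Z^3_{i+1}(P,R) = [Z^3_i(P,R), Z^3_i(P,R)]. Then the quotient algebra Z^3_2(P,R)/Z^3_3(P,R) is isomorphic as an R-algebra to the direct sum ⊕_{(x,y): l(x,y)=1} R·(e_{xxy}+e_{xyy}), i.e. to a direct sum of copies of R indexed by the pairs x < y in P with l(x,y) = 1, with coordinatewise multiplication. -/

import Mathlib

/-!
At a flag `(x,x,z)` or `(x,z,z)` with `x ⋖ z` a product `fg` of functions vanishing on the
diagonal flags `(w,w,w)` has the single term `f(x,x,z) g(x,z,z)`. Hence every element of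
`Z^3_2 = [J^3_1, J^3_1]` vanishes on the diagonal and takes equal values at `(x,x,z)` and
`(x,z,z)`; conversely, commutators of basis elements produce `e_{xxz} + e_{xzz}` for `x < z` and
every `e_{xyz}` with `l(x,z) ≥ 2`, so these conditions describe `Z^3_2` exactly.
On `Z^3_2` the map `f ↦ (f(x,x,z))_{x ⋖ z}` is therefore multiplicative and surjective with
kernel `J^3_2`. Being multiplicative with commutative target, it kills commutators, so
`Z^3_3 ⊆ J^3_2`; the same commutator computations, now with `e_{xxz} + e_{xzz}` and
`e_{xyz}` taken in `Z^3_2`, give `J^3_2 ⊆ Z^3_3`.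
-/

/-- 3-flags (chains x ≤ y ≤ z) in a poset `P`. -/
abbrev Flag3 (P : Type*) [PartialOrder P] : Type _ :=
  {t : P × P × P // t.1 ≤ t.2.1 ∧ t.2.1 ≤ t.2.2}

/-- `ell x y` is the length of the interval `[x,y]`, i.e. the maximal cardinality of a
chain in `[x,y]` minus one. -/
noncomputable def ell {P : Type*} [PartialOrder P] (x y : P) : ℕ∞ :=
  (Set.Icc x y).chainHeight (· < ·) - 1

section PreDefs

variable (P R : Type*) [PartialOrder P] [LocallyFiniteOrder P] [CommRing R]

/-- The multiplication of the partial flag incidence algebra `I^3(P,R)`. -/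
def mul3 : (Flag3 P → R) → (Flag3 P → R) → (Flag3 P → R) := fun f g t =>
  ∑ p ∈ ((Finset.Icc t.1.1 t.1.2.1) ×ˢ (Finset.Icc t.1.2.1 t.1.2.2)).attach,
    f ⟨(t.1.1, p.1.1, p.1.2), by
        obtain ⟨h1, h2⟩ := Finset.mem_product.mp p.2
        rw [Finset.mem_Icc] at h1 h2
        exact ⟨h1.1, h1.2.trans h2.1⟩⟩ *
    g ⟨(p.1.1, p.1.2, t.1.2.2), by
        obtain ⟨h1, h2⟩ := Finset.mem_product.mp p.2
        rw [Finset.mem_Icc] at h1 h2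
        exact ⟨h1.2.trans h2.1, h2.2⟩⟩

variable {P}

/-- The standard basis element `e_t` of `I^3(P,R)`. -/
def e3 [DecidableEq P] (t0 : Flag3 P) : Flag3 P → R := fun t => if t = t0 then 1 else 0

variable (P)

/-- The ideal `J^3_k(P,R)` of functions vanishing on flags `(x,y,z)` with `l(x,z) < k`. -/
def J3 (k : ℕ) : Submodule R (Flag3 P → R) where
  carrier := {f | ∀ t : Flag3 P, ell t.1.1 t.1.2.2 < (k : ℕ∞) → f t = 0}
  add_mem' := by
    intro f g hf hg t ht
    simp only [Pi.add_apply, hf t ht, hg t ht, add_zero]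
  zero_mem' := by intro t _; rfl
  smul_mem' := by
    intro c f hf t ht
    simp only [Pi.smul_apply, hf t ht, smul_zero]

/-- The commutator submodule `[U,V]`. -/
def commSub (U V : Submodule R (Flag3 P → R)) : Submodule R (Flag3 P → R) :=
  Submodule.span R {h | ∃ f ∈ U, ∃ g ∈ V, h = mul3 P R f g - mul3 P R g f}

end PreDefs

/-- `Z^3_2(P,R) = [J^3_1(P,R), J^3_1(P,R)]`. -/
def Z3two (P R : Type*) [PartialOrder P] [LocallyFiniteOrder P] [CommRing R] :
    Submodule R (Flag3 P → R) :=
  commSub P R (J3 P R 1) (J3 P R 1)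

/-- `Z^3_3(P,R) = [Z^3_2(P,R), Z^3_2(P,R)]`. -/
def Z3three (P R : Type*) [PartialOrder P] [LocallyFiniteOrder P] [CommRing R] :
    Submodule R (Flag3 P → R) :=
  commSub P R (Z3two P R) (Z3two P R)
section Length

variable {P : Type*} [PartialOrder P] {x z : P}

lemma ell_le_of_encard_le {n : ℕ∞} (h : (Set.Icc x z).encard ≤ n + 1) : ell x z ≤ n :=
  tsub_le_iff_right.2 ((Set.chainHeight_le_encard _ _).trans h)

lemma le_ell_of_isChain {n : ℕ} {t : Set P} (ht : t ⊆ Set.Icc x z) (hc : IsChain (· < ·) t)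
    (hn : t.encard = n + 1) : (n : ℕ∞) ≤ ell x z :=
  ENat.le_sub_of_add_le_right ENat.one_ne_top
    (hn ▸ Set.encard_le_chainHeight_of_isChain _ _ ht hc)

lemma ell_self (x : P) : ell x x = 0 :=
  nonpos_iff_eq_zero.1 <| ell_le_of_encard_le <| by simp

lemma one_le_ell_iff : 1 ≤ ell x z ↔ x < z := by
  refine ⟨fun h => ?_, fun h => ?_⟩
  · by_contra hxz
    have hsub : Set.Icc x z ⊆ {x} := fun y hy =>
      (hy.1.lt_or_eq.resolve_left fun hxy => hxz (hxy.trans_le hy.2)).symm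
    have := h.trans (ell_le_of_encard_le (n := 0) (by simpa using Set.encard_le_encard hsub))
    simp at this
  · refine le_ell_of_isChain (t := {x, z}) ?_ (IsChain.pair h)
      (by rw [Set.encard_pair h.ne]; rfl)
    simp [Set.insert_subset_iff, h.le]

lemma two_le_ell_iff : 2 ≤ ell x z ↔ ∃ c, x < c ∧ c < z := by
  refine ⟨fun h => ?_, fun ⟨c, hxc, hcz⟩ => ?_⟩
  · by_contra! hc
    have hsub : Set.Icc x z ⊆ {x, z} := fun y hy => by
      rcases hy.1.lt_or_eq with hxy | rfl
      · exact Or.inr (hy.2.lt_or_eq.resolve_left (hc y hxy))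
      · exact Or.inl rfl
    have := h.trans (ell_le_of_encard_le (n := 1)
      ((Set.encard_le_encard hsub).trans ((Set.encard_insert_le _ _).trans (by simp))))
    simp at this
  · refine le_ell_of_isChain (t := {x, c, z}) ?_ ?_
      (by rw [Set.encard_eq_three.2 ⟨x, c, z, hxc.ne, (hxc.trans hcz).ne, hcz.ne, rfl⟩]; rfl)
    · simp [Set.insert_subset_iff, hxc.le, hcz.le, (hxc.trans hcz).le]
    · exact (IsChain.pair hcz).insert fun b hb _ => Or.inl <| by
        rcases hb with rfl | rfl
        exacts [hxc, hxc.trans hcz]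

lemma ell_eq_one_iff_covBy : ell x z = 1 ↔ x ⋖ z := by
  have h (a : ℕ∞) : a = 1 ↔ 1 ≤ a ∧ ¬ 2 ≤ a := by
    induction a using ENat.recTopCoe <;> simp; omega
  simp [h, one_le_ell_iff, two_le_ell_iff, CovBy]

lemma ell_lt_two_iff_wcovBy (h : x ≤ z) : ell x z < 2 ↔ x ⩿ z := by
  simp [← not_le, two_le_ell_iff, WCovBy, h]

end Length

section Flags

variable {P R : Type*} [PartialOrder P] [CommRing R]

lemma mem_J3_one_iff {f : Flag3 P → R} :
    f ∈ J3 P R 1 ↔ ∀ x : P, f ⟨(x, x, x), le_rfl, le_rfl⟩ = 0 := by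
  refine ⟨fun hf x => hf _ (by simp [ell_self]), fun hf => ?_⟩
  rintro ⟨⟨x, y, z⟩, hxy, hyz⟩ h
  dsimp only at hxy hyz h
  obtain rfl : x = z := by
    by_contra hxz
    exact not_le.2 (by exact_mod_cast h) (one_le_ell_iff.2 ((hxy.trans hyz).lt_of_ne hxz))
  obtain rfl := le_antisymm hxy hyz
  exact hf x

lemma mem_J3_two_iff {f : Flag3 P → R} :
    f ∈ J3 P R 2 ↔ (∀ x : P, f ⟨(x, x, x), le_rfl, le_rfl⟩ = 0) ∧
    ∀ ⦃x z : P⦄ (h : x ⋖ z),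
      f ⟨(x, x, z), le_rfl, h.le⟩ = 0 ∧ f ⟨(x, z, z), h.le, le_rfl⟩ = 0 := by
  refine ⟨fun hf => ⟨fun x => hf _ (by simp [ell_self]), fun x z h => ?_⟩, fun ⟨hd, hc⟩ => ?_⟩
  · have : ell x z < 2 := by simp [ell_eq_one_iff_covBy.2 h]
    exact ⟨hf _ this, hf _ this⟩
  · rintro ⟨⟨x, y, z⟩, hxy, hyz⟩ h
    dsimp only at hxy hyz h
    have hw := (ell_lt_two_iff_wcovBy (hxy.trans hyz)).1 (by exact_mod_cast h)
    rcases wcovBy_iff_covBy_or_eq.1 hw with hxz | rfl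
    · rcases hxz.eq_or_eq hxy hyz with rfl | rfl
      exacts [(hc hxz).1, (hc hxz).2]
    · obtain rfl := le_antisymm hxy hyz
      exact hd x

open Classical in
noncomputable def extendFlag (f : Flag3 P → R) (s : P × P × P) : R :=
  if h : s.1 ≤ s.2.1 ∧ s.2.1 ≤ s.2.2 then f ⟨s, h⟩ else 0

lemma extendFlag_of_le (f : Flag3 P → R) {s : P × P × P} (h : s.1 ≤ s.2.1 ∧ s.2.1 ≤ s.2.2) :
    extendFlag f s = f ⟨s, h⟩ :=
  dif_pos h

variable [DecidableEq P]

variable (R) in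
/-- The indicator of the triple `s`: the basis element `e_s` when `s` is a flag, `0` otherwise. -/
def single3 (s : P × P × P) : Flag3 P → R := fun t => if t.1 = s then 1 else 0

variable (R) in
def edge3 (x z : P) : Flag3 P → R := single3 R (x, x, z) + single3 R (x, z, z)

lemma extendFlag_single3 {s s' : P × P × P} (h : s'.1 ≤ s'.2.1 ∧ s'.2.1 ≤ s'.2.2) :
    extendFlag (single3 R s) s' = if s' = s then 1 else 0 :=
  extendFlag_of_le _ h

lemma sum_smul_single3 [Fintype (Flag3 P)] (f : Flag3 P → R) : ∑ t, f t • single3 R t.1 = f := by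
  funext t
  simp [Finset.sum_apply, single3, Subtype.coe_inj]

lemma single3_mem_J3_one {s : P × P × P} (h : s.1 ≠ s.2.2) : single3 R s ∈ J3 P R 1 :=
  mem_J3_one_iff.2 fun x => if_neg fun hx => h (by rw [← hx])

lemma edge3_mem_J3_one {x z : P} (h : x < z) : edge3 R x z ∈ J3 P R 1 :=
  add_mem (single3_mem_J3_one h.ne) (single3_mem_J3_one h.ne)

end Flags

section Multiplication

variable {P R : Type*} [PartialOrder P] [LocallyFiniteOrder P] [CommRing R]

lemma mul3_apply (f g : Flag3 P → R) (t : Flag3 P) :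
    mul3 P R f g t = ∑ p ∈ Finset.Icc t.1.1 t.1.2.1 ×ˢ Finset.Icc t.1.2.1 t.1.2.2,
      extendFlag f (t.1.1, p) * extendFlag g (p.1, p.2, t.1.2.2) := by
  rw [mul3, ← Finset.sum_attach (Finset.Icc t.1.1 t.1.2.1 ×ˢ Finset.Icc t.1.2.1 t.1.2.2)]
  refine Finset.sum_congr rfl fun p _ => ?_
  obtain ⟨h1, h2⟩ := Finset.mem_product.mp p.2
  rw [Finset.mem_Icc] at h1 h2
  rw [extendFlag_of_le _ ⟨h1.1, h1.2.trans h2.1⟩, extendFlag_of_le _ ⟨h1.2.trans h2.1, h2.2⟩]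

lemma mul3_add_left (f f' g : Flag3 P → R) :
    mul3 P R (f + f') g = mul3 P R f g + mul3 P R f' g := by
  funext t
  simp only [mul3, Pi.add_apply, add_mul, Finset.sum_add_distrib]

lemma mul3_add_right (f g g' : Flag3 P → R) :
    mul3 P R f (g + g') = mul3 P R f g + mul3 P R f g' := by
  funext t
  simp only [mul3, Pi.add_apply, mul_add, Finset.sum_add_distrib]

lemma mul3_apply_diag (f g : Flag3 P → R) (x : P) :
    mul3 P R f g ⟨(x, x, x), le_rfl, le_rfl⟩ =
      f ⟨(x, x, x), le_rfl, le_rfl⟩ * g ⟨(x, x, x), le_rfl, le_rfl⟩ := by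
  rw [mul3_apply, Finset.Icc_self, Finset.singleton_product_singleton, Finset.sum_singleton,
    extendFlag_of_le _ ⟨le_rfl, le_rfl⟩, extendFlag_of_le _ ⟨le_rfl, le_rfl⟩]

variable {x z : P}

lemma CovBy.finset_Icc_eq [DecidableEq P] (h : x ⋖ z) : Finset.Icc x z = {x, z} := by
  rw [← Finset.coe_inj, Finset.coe_Icc, h.Icc_eq, Finset.coe_pair]

lemma mul3_apply_covBy_left {f : Flag3 P → R} (g : Flag3 P → R) (h : x ⋖ z)
    (hf : f ⟨(x, x, x), le_rfl, le_rfl⟩ = 0) :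
    mul3 P R f g ⟨(x, x, z), le_rfl, h.le⟩ =
      f ⟨(x, x, z), le_rfl, h.le⟩ * g ⟨(x, z, z), h.le, le_rfl⟩ := by
  classical
  rw [mul3_apply, Finset.Icc_self, h.finset_Icc_eq, Finset.sum_product, Finset.sum_singleton,
    Finset.sum_pair h.ne, extendFlag_of_le (s := (x, x, x)) f ⟨le_rfl, le_rfl⟩, hf, zero_mul,
    zero_add, extendFlag_of_le f ⟨le_rfl, h.le⟩, extendFlag_of_le g ⟨h.le, le_rfl⟩]

lemma mul3_apply_covBy_right (f : Flag3 P → R) {g : Flag3 P → R} (h : x ⋖ z)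
    (hg : g ⟨(z, z, z), le_rfl, le_rfl⟩ = 0) :
    mul3 P R f g ⟨(x, z, z), h.le, le_rfl⟩ =
      f ⟨(x, x, z), le_rfl, h.le⟩ * g ⟨(x, z, z), h.le, le_rfl⟩ := by
  classical
  rw [mul3_apply, Finset.Icc_self, h.finset_Icc_eq, Finset.sum_product, Finset.sum_pair h.ne,
    Finset.sum_singleton, Finset.sum_singleton,
    extendFlag_of_le (s := (z, z, z)) g ⟨le_rfl, le_rfl⟩, hg,
    mul_zero, add_zero, extendFlag_of_le f ⟨le_rfl, h.le⟩, extendFlag_of_le g ⟨h.le, le_rfl⟩]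

variable [DecidableEq P]

lemma mul3_single3_of_ne {s u : P × P × P} (h : s.2.1 ≠ u.1 ∨ s.2.2 ≠ u.2.1) :
    mul3 P R (single3 R s) (single3 R u) = 0 := by
  funext t
  rw [mul3_apply]
  refine Finset.sum_eq_zero fun p hp => ?_
  simp only [Finset.mem_product, Finset.mem_Icc] at hp
  rw [extendFlag_single3 ⟨hp.1.1, hp.1.2.trans hp.2.1⟩,
    extendFlag_single3 ⟨hp.1.2.trans hp.2.1, hp.2.2⟩]
  by_cases h1 : (t.1.1, p) = s
  · rw [if_pos h1, if_neg fun h2 => by subst h1 h2; simp at h, mul_zero]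
  · rw [if_neg h1, zero_mul]

lemma mul3_single3_single3 {a b c d : P} (hab : a ≤ b) (hcd : c ≤ d) :
    mul3 P R (single3 R (a, b, c)) (single3 R (b, c, d)) =
      ∑ w ∈ Finset.Icc b c, single3 R (a, w, d) := by
  funext ⟨⟨x, y, z⟩, hxy, hyz⟩
  rw [mul3_apply, Finset.sum_apply]
  dsimp only at hxy hyz ⊢
  have hterm : ∀ p ∈ Finset.Icc x y ×ˢ Finset.Icc y z,
      extendFlag (single3 R (a, b, c)) (x, p) * extendFlag (single3 R (b, c, d)) (p.1, p.2, z) =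
        if p = (b, c) then (if x = a ∧ z = d then 1 else 0) else 0 := by
    intro p hp
    simp only [Finset.mem_product, Finset.mem_Icc] at hp
    rw [extendFlag_single3 ⟨hp.1.1, hp.1.2.trans hp.2.1⟩,
      extendFlag_single3 ⟨hp.1.2.trans hp.2.1, hp.2.2⟩]
    split_ifs <;> simp_all
  rw [Finset.sum_congr rfl hterm, Finset.sum_ite_eq']
  simp only [single3, Prod.mk.injEq]
  by_cases hxz : x = a ∧ z = d
  · obtain ⟨rfl, rfl⟩ := hxz
    simp only [true_and, and_true, if_true, Finset.sum_ite_eq]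
    exact if_congr (by simp [hab, hcd]) rfl rfl
  · simp only [if_neg hxz, ite_self]
    exact (Finset.sum_eq_zero fun w _ => if_neg fun h => hxz ⟨h.1, h.2.2⟩).symm

end Multiplication

section CoverCoefficients

variable {P R : Type*} [PartialOrder P] [CommRing R] {f g : Flag3 P → R}

variable (P R) in
def coverBalanced : Submodule R (Flag3 P → R) where
  carrier := {f | f ∈ J3 P R 1 ∧
    ∀ ⦃x z : P⦄ (h : x ⋖ z), f ⟨(x, x, z), le_rfl, h.le⟩ = f ⟨(x, z, z), h.le, le_rfl⟩}
  add_mem' := fun ⟨hf, hf'⟩ ⟨hg, hg'⟩ => ⟨add_mem hf hg, fun _ _ h => by simp [hf' h, hg' h]⟩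
  zero_mem' := ⟨zero_mem _, fun _ _ _ => rfl⟩
  smul_mem' := fun c _ ⟨hf, hf'⟩ => ⟨Submodule.smul_mem _ c hf, fun _ _ h => by simp [hf' h]⟩

variable (P) in
abbrev CoverPair : Type _ := {p : P × P // p.1 < p.2 ∧ ell p.1 p.2 = 1}

variable (P R) in
def coverCoeff : (Flag3 P → R) →ₗ[R] (CoverPair P → R) where
  toFun f p := f ⟨(p.1.1, p.1.1, p.1.2), le_rfl, p.2.1.le⟩
  map_add' _ _ := rfl
  map_smul' _ _ := rfl

lemma coverCoeff_apply (f : Flag3 P → R) (p : CoverPair P) :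
    coverCoeff P R f p = f ⟨(p.1.1, p.1.1, p.1.2), le_rfl, p.2.1.le⟩ :=
  rfl

lemma mem_J3_two_iff_coverCoeff_eq_zero (hf : f ∈ coverBalanced P R) :
    f ∈ J3 P R 2 ↔ coverCoeff P R f = 0 := by
  rw [mem_J3_two_iff]
  refine ⟨fun ⟨_, h⟩ => funext fun p => (h (ell_eq_one_iff_covBy.1 p.2.2)).1, fun h => ?_⟩
  refine ⟨mem_J3_one_iff.1 hf.1, fun x z hxz => ?_⟩
  have hx : f ⟨(x, x, z), le_rfl, hxz.le⟩ = 0 :=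
    congrFun h ⟨(x, z), hxz.lt, ell_eq_one_iff_covBy.2 hxz⟩
  exact ⟨hx, hf.2 hxz ▸ hx⟩

lemma coverCoeff_edge3 [DecidableEq P] (p : CoverPair P) :
    coverCoeff P R (edge3 R p.1.1 p.1.2) = Pi.single p 1 := by
  funext q
  have hq : ¬(q.1.1 = p.1.1 ∧ q.1.1 = p.1.2 ∧ q.1.2 = p.1.2) := fun h =>
    p.2.1.ne (h.1.symm.trans h.2.1)
  simp only [coverCoeff_apply, edge3, Pi.add_apply, single3, Pi.single_apply, Subtype.ext_iff,
    Prod.ext_iff, if_neg hq, add_zero, and_self_left]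

variable [LocallyFiniteOrder P]

lemma mul3_mem_coverBalanced (hf : f ∈ coverBalanced P R) (hg : g ∈ coverBalanced P R) :
    mul3 P R f g ∈ coverBalanced P R := by
  have hf0 := mem_J3_one_iff.1 hf.1
  have hg0 := mem_J3_one_iff.1 hg.1
  refine ⟨mem_J3_one_iff.2 fun x => by rw [mul3_apply_diag, hf0 x, zero_mul], fun x z h => ?_⟩
  rw [mul3_apply_covBy_left g h (hf0 x), mul3_apply_covBy_right f h (hg0 z)]

lemma coverCoeff_mul3 (hf : f ∈ J3 P R 1) (hg : g ∈ coverBalanced P R) :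
    coverCoeff P R (mul3 P R f g) = coverCoeff P R f * coverCoeff P R g := by
  funext p
  have h := ell_eq_one_iff_covBy.1 p.2.2
  exact (mul3_apply_covBy_left g h (mem_J3_one_iff.1 hf _)).trans (congrArg _ (hg.2 h).symm)

end CoverCoefficients

section Commutators

variable {P R : Type*} [PartialOrder P] [LocallyFiniteOrder P] [CommRing R]

lemma commSub_le_iff {U V S : Submodule R (Flag3 P → R)} :
    commSub P R U V ≤ S ↔ ∀ f ∈ U, ∀ g ∈ V, mul3 P R f g - mul3 P R g f ∈ S := by
  rw [commSub, Submodule.span_le]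
  exact ⟨fun h f hf g hg => h ⟨f, hf, g, hg, rfl⟩, fun h _ ⟨f, hf, g, hg, e⟩ => e ▸ h f hf g hg⟩

lemma mul3_sub_mul3_mem_commSub {U V : Submodule R (Flag3 P → R)} {f g : Flag3 P → R}
    (hf : f ∈ U) (hg : g ∈ V) : mul3 P R f g - mul3 P R g f ∈ commSub P R U V :=
  Submodule.subset_span ⟨f, hf, g, hg, rfl⟩

variable [DecidableEq P]

variable {U : Submodule R (Flag3 P → R)} {x y z c : P}

lemma single3_mem_commSub_of_lt_of_lt (hU : ∀ ⦃x z : P⦄, x < z → edge3 R x z ∈ U)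
    (hxy : x < y) (hyz : y < z) : single3 R (x, y, z) ∈ commSub P R U U := by
  have h := mul3_sub_mul3_mem_commSub (hU hxy) (hU hyz)
  simpa [edge3, mul3_add_left, mul3_add_right, mul3_single3_single3, mul3_single3_of_ne,
    hxy.le, hyz.le, hxy.ne, hyz.ne, hxy.ne', hyz.ne', (hxy.trans hyz).ne'] using h

lemma single3_left_mem_commSub (hU : ∀ ⦃x z : P⦄, x < z → edge3 R x z ∈ U)
    (hS : ∀ ⦃x y z : P⦄, x < y → y < z → single3 R (x, y, z) ∈ U) (hxc : x < c) (hcz : c < z) :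
    single3 R (x, x, z) ∈ commSub P R U U := by
  have hcomm : mul3 P R (edge3 R x c) (single3 R (x, c, z)) -
      mul3 P R (single3 R (x, c, z)) (edge3 R x c) = ∑ w ∈ Finset.Icc x c, single3 R (x, w, z) := by
    simp [edge3, mul3_add_left, mul3_add_right, mul3_single3_single3, mul3_single3_of_ne,
      hcz.le, hxc.ne', hcz.ne']
  have h := mul3_sub_mul3_mem_commSub (hU hxc) (hS hxc hcz)
  rw [hcomm, Finset.Icc_eq_cons_Ioc hxc.le, Finset.sum_cons] at h
  have hsum : ∑ w ∈ Finset.Ioc x c, single3 R (x, w, z) ∈ commSub P R U U :=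
    Submodule.sum_mem _ fun w hw => single3_mem_commSub_of_lt_of_lt hU (Finset.mem_Ioc.1 hw).1
      ((Finset.mem_Ioc.1 hw).2.trans_lt hcz)
  simpa using sub_mem h hsum

lemma single3_right_mem_commSub (hU : ∀ ⦃x z : P⦄, x < z → edge3 R x z ∈ U)
    (hS : ∀ ⦃x y z : P⦄, x < y → y < z → single3 R (x, y, z) ∈ U) (hxc : x < c) (hcz : c < z) :
    single3 R (x, z, z) ∈ commSub P R U U := by
  have hcomm : mul3 P R (single3 R (x, c, z)) (edge3 R c z) -
      mul3 P R (edge3 R c z) (single3 R (x, c, z)) = ∑ w ∈ Finset.Icc c z, single3 R (x, w, z) := by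
    simp [edge3, mul3_add_left, mul3_add_right, mul3_single3_single3, mul3_single3_of_ne,
      hxc.le, hxc.ne', hcz.ne', (hxc.trans hcz).ne']
  have h := mul3_sub_mul3_mem_commSub (hS hxc hcz) (hU hcz)
  rw [hcomm, Finset.Icc_eq_cons_Ico hcz.le, Finset.sum_cons] at h
  have hsum : ∑ w ∈ Finset.Ico c z, single3 R (x, w, z) ∈ commSub P R U U :=
    Submodule.sum_mem _ fun w hw => single3_mem_commSub_of_lt_of_lt hU
      (hxc.trans_le (Finset.mem_Ico.1 hw).1) (Finset.mem_Ico.1 hw).2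
  simpa using sub_mem h hsum

lemma single3_mem_commSub_of_two_le_ell (hU : ∀ ⦃x z : P⦄, x < z → edge3 R x z ∈ U)
    (hS : ∀ ⦃x y z : P⦄, x < y → y < z → single3 R (x, y, z) ∈ U) (t : Flag3 P)
    (h : 2 ≤ ell t.1.1 t.1.2.2) : single3 R t.1 ∈ commSub P R U U := by
  obtain ⟨⟨x, y, z⟩, hxy, hyz⟩ := t
  dsimp only at hxy hyz h ⊢
  obtain ⟨c, hxc, hcz⟩ := two_le_ell_iff.1 h
  rcases hxy.eq_or_lt with rfl | hxy
  · exact single3_left_mem_commSub hU hS hxc hcz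
  rcases hyz.eq_or_lt with rfl | hyz
  · exact single3_right_mem_commSub hU hS hxc hcz
  exact single3_mem_commSub_of_lt_of_lt hU hxy hyz

lemma J3_two_le_commSub [Finite P] (hU : ∀ ⦃x z : P⦄, x < z → edge3 R x z ∈ U)
    (hS : ∀ ⦃x y z : P⦄, x < y → y < z → single3 R (x, y, z) ∈ U) :
    J3 P R 2 ≤ commSub P R U U := by
  intro f hf
  have := Fintype.ofFinite (Flag3 P)
  rw [← sum_smul_single3 f]
  refine Submodule.sum_mem _ fun t _ => ?_
  by_cases ht : 2 ≤ ell t.1.1 t.1.2.2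
  · exact Submodule.smul_mem _ _ (single3_mem_commSub_of_two_le_ell hU hS t ht)
  · rw [hf t (by exact_mod_cast not_le.1 ht), zero_smul]
    exact Submodule.zero_mem _

end Commutators

section SecondTerm

variable {P R : Type*} [PartialOrder P] [LocallyFiniteOrder P] [CommRing R]

section

variable [DecidableEq P] {x y z : P}

lemma single3_mem_Z3two (hxy : x < y) (hyz : y < z) : single3 R (x, y, z) ∈ Z3two P R :=
  single3_mem_commSub_of_lt_of_lt (fun _ _ h => edge3_mem_J3_one h) hxy hyz

lemma edge3_mem_Z3two (h : x < z) : edge3 R x z ∈ Z3two P R := by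
  have hc : _ ∈ Z3two P R := mul3_sub_mul3_mem_commSub
    (single3_mem_J3_one (R := R) (s := (x, x, z)) h.ne)
    (single3_mem_J3_one (R := R) (s := (x, z, z)) h.ne)
  rw [mul3_single3_single3 le_rfl le_rfl, mul3_single3_of_ne (Or.inl h.ne'), sub_zero,
    Finset.Icc_eq_cons_Ioc h.le, Finset.sum_cons, Finset.Ioc_eq_cons_Ioo h, Finset.sum_cons,
    ← add_assoc] at hc
  have hsum : ∑ w ∈ Finset.Ioo x z, single3 R (x, w, z) ∈ Z3two P R :=
    Submodule.sum_mem _ fun w hw =>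
      single3_mem_Z3two (Finset.mem_Ioo.1 hw).1 (Finset.mem_Ioo.1 hw).2
  simpa [edge3] using sub_mem hc hsum

end

lemma J3_two_le_Z3two [Finite P] : J3 P R 2 ≤ Z3two P R := by
  classical
  exact J3_two_le_commSub (fun _ _ h => edge3_mem_J3_one h)
    (fun _ _ _ h1 h2 => single3_mem_J3_one (h1.trans h2).ne)

lemma Z3two_le_coverBalanced : Z3two P R ≤ coverBalanced P R := by
  refine commSub_le_iff.2 fun f hf g hg => ?_
  have hf0 := mem_J3_one_iff.1 hf
  have hg0 := mem_J3_one_iff.1 hg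
  refine ⟨mem_J3_one_iff.2 fun x => by simp [mul3_apply_diag, hf0 x], fun x z h => ?_⟩
  rw [Pi.sub_apply, Pi.sub_apply, mul3_apply_covBy_left g h (hf0 x),
    mul3_apply_covBy_left f h (hg0 x), mul3_apply_covBy_right f h (hg0 z),
    mul3_apply_covBy_right g h (hf0 z)]

lemma exists_mem_Z3two_coverCoeff_eq [Finite P] (g : CoverPair P → R) :
    ∃ f ∈ Z3two P R, coverCoeff P R f = g := by
  classical
  have := Fintype.ofFinite (CoverPair P)
  refine ⟨∑ p, g p • edge3 R p.1.1 p.1.2,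
    Submodule.sum_mem _ fun p _ => Submodule.smul_mem _ _ (edge3_mem_Z3two p.2.1), ?_⟩
  ext q
  simp [map_sum, coverCoeff_edge3, Pi.single_apply]

lemma coverBalanced_le_Z3two [Finite P] : coverBalanced P R ≤ Z3two P R := by
  intro f hf
  obtain ⟨f', hf', hcoeff⟩ := exists_mem_Z3two_coverCoeff_eq (coverCoeff P R f)
  have hJ : f - f' ∈ J3 P R 2 :=
    (mem_J3_two_iff_coverCoeff_eq_zero (sub_mem hf (Z3two_le_coverBalanced hf'))).2
      (by rw [map_sub, hcoeff, sub_self])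
  simpa using add_mem (J3_two_le_Z3two hJ) hf'

lemma Z3two_eq_coverBalanced [Finite P] : Z3two P R = coverBalanced P R :=
  le_antisymm Z3two_le_coverBalanced coverBalanced_le_Z3two

end SecondTerm

section ThirdTerm

variable {P R : Type*} [PartialOrder P] [LocallyFiniteOrder P] [CommRing R]

lemma Z3three_le_J3_two : Z3three P R ≤ J3 P R 2 := by
  refine commSub_le_iff.2 fun f hf g hg => ?_
  replace hf := Z3two_le_coverBalanced hf
  replace hg := Z3two_le_coverBalanced hg
  refine (mem_J3_two_iff_coverCoeff_eq_zero
    (sub_mem (mul3_mem_coverBalanced hf hg) (mul3_mem_coverBalanced hg hf))).2 ?_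
  rw [map_sub, coverCoeff_mul3 hf.1 hg, coverCoeff_mul3 hg.1 hf, mul_comm, sub_self]

lemma J3_two_le_Z3three [Finite P] : J3 P R 2 ≤ Z3three P R := by
  classical
  exact J3_two_le_commSub (fun _ _ h => edge3_mem_Z3two h)
    (fun _ _ _ h1 h2 => single3_mem_Z3two h1 h2)

lemma Z3three_eq_J3_two [Finite P] : Z3three P R = J3 P R 2 :=
  le_antisymm Z3three_le_J3_two J3_two_le_Z3three

end ThirdTerm

theorem Z3_two_quotient_Z3_three_iso_general
    {P R : Type*} [PartialOrder P] [Fintype P] [LocallyFiniteOrder P]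
    [CommRing R] :
    ∃ hmul : ∀ f g : Z3two P R, mul3 P R f.1 g.1 ∈ Z3two P R,
    ∃ Φ : (Z3two P R ⧸ (Z3three P R).comap (Z3two P R).subtype) ≃ₗ[R]
        ({p : P × P // p.1 < p.2 ∧ ell p.1 p.2 = 1} → R),
      ∀ f g : Z3two P R,
        Φ (Submodule.Quotient.mk (⟨mul3 P R f.1 g.1, hmul f g⟩ : Z3two P R)) =
          Φ (Submodule.Quotient.mk f) * Φ (Submodule.Quotient.mk g) := by
  have hZ2 : ∀ f : Z3two P R, f.1 ∈ coverBalanced P R := fun f => Z3two_le_coverBalanced f.2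
  refine ⟨fun f g => coverBalanced_le_Z3two (mul3_mem_coverBalanced (hZ2 f) (hZ2 g)), ?_⟩
  let π := (coverCoeff P R).domRestrict (Z3two P R)
  have hker : (Z3three P R).comap (Z3two P R).subtype = LinearMap.ker π := by
    ext f
    rw [Submodule.mem_comap, LinearMap.mem_ker, Z3three_eq_J3_two]
    exact mem_J3_two_iff_coverCoeff_eq_zero (hZ2 f)
  have hπ : Function.Surjective π := fun g => by
    obtain ⟨f, hf, rfl⟩ := exists_mem_Z3two_coverCoeff_eq g
    exact ⟨⟨f, hf⟩, rfl⟩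
  refine ⟨(Submodule.quotEquivOfEq _ _ hker).trans (π.quotKerEquivOfSurjective hπ),
    fun f g => ?_⟩
  simp only [LinearEquiv.trans_apply, Submodule.quotEquivOfEq_mk,
    LinearMap.quotKerEquivOfSurjective_apply_mk]
  exact coverCoeff_mul3 (hZ2 f).1 (hZ2 g)

/-- The quotient algebra `Z^3_2(P,R)/Z^3_3(P,R)` is isomorphic, as an
`R`-algebra, to a direct sum of copies of `R` indexed by the pairs `x < y` with
`l(x,y) = 1`, with coordinatewise multiplication. -/
theorem Z3_two_quotient_Z3_three_iso
    {P R : Type*} [PartialOrder P] [Fintype P] [DecidableEq P] [LocallyFiniteOrder P]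
    [CommRing R] :
    ∃ hmul : ∀ f g : Z3two P R, mul3 P R f.1 g.1 ∈ Z3two P R,
    ∃ Φ : (Z3two P R ⧸ (Z3three P R).comap (Z3two P R).subtype) ≃ₗ[R]
        ({p : P × P // p.1 < p.2 ∧ ell p.1 p.2 = 1} → R),
      ∀ f g : Z3two P R,
        Φ (Submodule.Quotient.mk (⟨mul3 P R f.1 g.1, hmul f g⟩ : Z3two P R)) =
          Φ (Submodule.Quotient.mk f) * Φ (Submodule.Quotient.mk g) :=
  Z3_two_quotient_Z3_three_iso_general
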